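/- arXiv:2012.08632 — 2 statements merged into one kernel-verified Lean document; each statement's English description precedes it below -/
import Mathlib

section
/- Let H be a strictly 2-balanced graph with δ(H) ≥ 2 and m₂(H) − ⌊m₂(H)⌋ ≤ 1/2, let H⃗ be an anti-directed orientation of H, and let G be a graph with m(G) < m₂(H). Then some orientation of G contains no copy of H⃗. -/
/-- An orientation of a simple graph `G`: an assignment of a direction to each edge. -/
structure GraphOrientation {V : Type*} (G : SimpleGraph V) where
  adj : V → V → Prop
  le : ∀ {u v}, adj u v → G.Adj u v
  total : ∀ {u v}, G.Adj u v → adj u v ∨ adj v u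
  asymm : ∀ {u v}, adj u v → ¬ adj v u

/-!
Let `ρ = (e(H) - 1) / (v(H) - 2)`, `a = ⌊ρ⌋` and `b = ⌈ρ⌉ - 1`. Since the fractional part of `ρ`
is at most `1/2`, `a + b + 1 ≥ 2ρ`, so `m(G) < ρ` makes `G` `(a + b)`-degenerate: the
vertices can be ranked so that each has at most `a + b` later neighbours. Orient at most `a` of
these edges away from the vertex and the remaining ones, at most `b`, towards it.

In a copy of the anti-directed `H⃗` every vertex is a source or a sink, and `H` is bipartite
between the sources `S` and the sinks `T`. Counting the edges of the copy at their earlier end,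
a source accounts for at most `a` edges, a sink for at most `b`, and the last two vertices for at
most one together, so `e(H) + 2b ≤ a|S| + b|T| + 1`. If `ρ` is not an integer then `a = b` and
this reads `ρ ≤ a`; if it is, it forces `|T| ≤ 2`, and then `e(H) ≤ |S||T| ≤ 2(v(H) - 2)`
contradicts `ρ ≥ 2`.
-/

open Finset

theorem Nat.two_mul_le_floor_add_ceil_of_fract_le {R : Type*} [Field R] [LinearOrder R]
    [IsStrictOrderedRing R] [FloorRing R] {x : R} (hx0 : 0 ≤ x) (hx : Int.fract x ≤ 1 / 2) :
    2 * x ≤ ⌊x⌋₊ + ⌈x⌉₊ := by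
  rw [natCast_floor_eq_intCast_floor hx0, natCast_ceil_eq_intCast_ceil hx0]
  rcases eq_or_ne (Int.fract x) 0 with h0 | h0
  · rw [Int.fract, sub_eq_zero] at h0
    rw [h0, Int.ceil_intCast, Int.floor_intCast, two_mul]
  · rw [Int.ceil_eq_add_one_sub_fract h0, ← Int.self_sub_fract]
    linarith

theorem floor_mul_add_mul_add_one_lt_of_ceil_eq {R : Type*} [Field R] [LinearOrder R]
    [IsStrictOrderedRing R] [FloorSemiring R] {ρ : R} {b e s t : ℕ} (hb : ⌈ρ⌉₊ = b + 1)
    (hρ : (e : R) - 1 = ρ * (s + t - 2)) (hρ1 : 1 < ρ) (hst : 3 ≤ s + t) (hbip : e ≤ s * t) :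
    ⌊ρ⌋₊ * s + b * t + 1 < e + 2 * b := by
  have hfloor : (⌊ρ⌋₊ : R) ≤ ρ := Nat.floor_le (by linarith)
  have hceil : ρ ≤ b + 1 := by exact_mod_cast hb ▸ Nat.le_ceil ρ
  have hst' : (3 : R) ≤ s + t := by exact_mod_cast hst
  by_contra! hle
  have hle' : (e : R) + 2 * b ≤ ⌊ρ⌋₊ * s + b * t + 1 := by exact_mod_cast hle
  rcases (hb ▸ Nat.ceil_le_floor_add_one ρ).lt_or_eq with hlt | heq
  · -- `ρ = b + 1` is an integer: the count forces `t ≤ 2`, and then `e ≤ s * t` is too small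
    have ha : ⌊ρ⌋₊ = b + 1 := le_antisymm (hb ▸ Nat.floor_le_ceil ρ) (by omega)
    obtain rfl : ρ = b + 1 := le_antisymm hceil (by exact_mod_cast ha ▸ hfloor)
    rw [ha] at hle'
    have hb1 : (1 : R) ≤ b := Nat.one_le_cast.2 (Nat.cast_pos (α := R).1 (by linarith))
    have ht : t ≤ 2 := by
      have : (t : R) ≤ 2 := by push_cast at hle'; nlinarith
      exact_mod_cast this
    have hbip' : (e : R) ≤ s * t := by exact_mod_cast hbip
    interval_cases t <;> push_cast at hst' hbip' hρ <;> nlinarith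
  · -- `ρ` is not an integer, so `⌊ρ⌋₊ = b < ρ`, while the count gives `ρ ≤ b`
    have hlt : (⌊ρ⌋₊ : R) < ρ := Nat.lt_ceil.1 (by omega)
    rw [Nat.add_right_cancel heq] at hle'
    nlinarith

namespace SimpleGraph

variable {V : Type*} [Fintype V] (G : SimpleGraph V) [DecidableRel G.Adj]

def twoDensity : ℚ := ((#G.edgeFinset : ℚ) - 1) / ((Fintype.card V : ℚ) - 2)

theorem twoDensity_mul_card_sub_two (hV : 3 ≤ Fintype.card V) :
    G.twoDensity * ((Fintype.card V : ℚ) - 2) = #G.edgeFinset - 1 := by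
  have : (3 : ℚ) ≤ Fintype.card V := by exact_mod_cast hV
  exact div_mul_cancel₀ _ (by linarith)

theorem card_mul_minDegree_le_two_mul_card_edgeFinset :
    Fintype.card V * G.minDegree ≤ 2 * #G.edgeFinset := by
  rw [← sum_degrees_eq_twice_card_edges, ← smul_eq_mul, ← card_univ]
  exact card_nsmul_le_sum _ _ _ fun v _ => G.minDegree_le_degree v

theorem one_lt_twoDensity (hV : 3 ≤ Fintype.card V) (hδ : 2 ≤ G.minDegree) :
    1 < G.twoDensity := by
  have hV' : (3 : ℚ) ≤ Fintype.card V := by exact_mod_cast hV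
  have he : (Fintype.card V : ℚ) ≤ #G.edgeFinset := by
    have := G.card_mul_minDegree_le_two_mul_card_edgeFinset
    exact_mod_cast (show Fintype.card V ≤ #G.edgeFinset by nlinarith)
  rw [twoDensity, lt_div_iff₀ (by linarith)]
  linarith

theorem sum_card_neighborFinset_inter_eq_two_mul_ncard_edgeSet [DecidableEq V] (A : Finset V) :
    ∑ x ∈ A, #(G.neighborFinset x ∩ A) = 2 * ((⊤ : G.Subgraph).induce ↑A).edgeSet.ncard := by
  classical
  set J := ((⊤ : G.Subgraph).induce ↑A).spanningCoe
  have hJ : ∀ x, J.degree x = if x ∈ A then #(G.neighborFinset x ∩ A) else 0 := by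
    intro x
    rw [← card_neighborFinset_eq_degree]
    split_ifs with hx
    · congr 1; ext y; simp [J, hx, and_comm]
    · rw [card_eq_zero]; ext y; simp [J, hx]
  rw [← Subgraph.edgeSet_spanningCoe, ← coe_edgeFinset, Set.ncard_coe_finset,
    ← J.sum_degrees_eq_twice_card_edges]
  simp [hJ]

theorem exists_card_neighborFinset_inter_le_of_density [DecidableEq V] {R : Type*} [Field R]
    [LinearOrder R] [IsStrictOrderedRing R] {ρ : R} {d : ℕ} (hd : 2 * ρ ≤ d + 1)
    (hm : ∀ J : G.Subgraph, J.verts.Nonempty → (J.edgeSet.ncard : R) < ρ * J.verts.ncard)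
    {A : Finset V} (hA : A.Nonempty) : ∃ x ∈ A, #(G.neighborFinset x ∩ A) ≤ d := by
  by_contra! hdense
  set J := (⊤ : G.Subgraph).induce ↑A
  have hsparse := hm J (by simpa [J] using hA)
  rw [Subgraph.induce_verts, Set.ncard_coe_finset] at hsparse
  have hsum : (d + 1) * #A ≤ 2 * J.edgeSet.ncard := by
    rw [← sum_card_neighborFinset_inter_eq_two_mul_ncard_edgeSet, mul_comm, ← smul_eq_mul]
    exact card_nsmul_le_sum _ _ _ fun x hx => hdense x hx
  have hA' : (0 : R) < #A := by exact_mod_cast hA.card_pos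
  have := calc ((d : R) + 1) * #A
      _ ≤ 2 * J.edgeSet.ncard := by exact_mod_cast hsum
      _ < 2 * (ρ * #A) := by linarith
      _ ≤ (d + 1) * #A := by rw [← mul_assoc]; exact mul_le_mul_of_nonneg_right hd hA'.le
  exact lt_irrefl _ this

def laterNeighborFinset (r : V → ℕ) (v : V) : Finset V := {u ∈ G.neighborFinset v | r v < r u}

theorem exists_injective_card_laterNeighborFinset_le [DecidableEq V] {d : ℕ}
    (hd : ∀ A : Finset V, A.Nonempty → ∃ x ∈ A, #(G.neighborFinset x ∩ A) ≤ d) :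
    ∃ r : V → ℕ, r.Injective ∧ ∀ v, #(G.laterNeighborFinset r v) ≤ d := by
  suffices h : ∀ A : Finset V, ∃ r : V → ℕ, Set.InjOn r A ∧
      ∀ v ∈ A, #{u ∈ G.neighborFinset v ∩ A | r v < r u} ≤ d by
    obtain ⟨r, hr, hrd⟩ := h univ
    exact ⟨r, Set.injOn_univ.1 (by simpa using hr),
      fun v => by simpa [laterNeighborFinset] using hrd v (mem_univ v)⟩
  intro A
  induction A using Finset.strongInduction with
  | H A ih =>
  rcases A.eq_empty_or_nonempty with rfl | hA
  · exact ⟨0, by simp, by simp⟩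
  obtain ⟨x, hx, hxd⟩ := hd A hA
  obtain ⟨r, hr, hrd⟩ := ih (A.erase x) (erase_ssubset hx)
  -- `x` goes first, so all its neighbours in `A` come later
  refine ⟨fun v => if v = x then 0 else r v + 1, ?_, fun v hv => ?_⟩
  · intro u hu v hv huv
    simp only at huv
    split_ifs at huv with hux hvx hvx
    · rw [hux, hvx]
    · exact hr (by simp [hux, hu]) (by simp [hvx, hv]) (by omega)
  · by_cases hvx : v = x
    · subst hvx
      exact (card_filter_le _ _).trans hxd
    · refine (card_le_card fun u hu => ?_).trans (hrd v (by simp [hvx, hv]))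
      simp only [mem_filter, mem_inter, mem_erase, if_neg hvx] at hu ⊢
      split_ifs at hu with hux
      · omega
      · exact ⟨⟨hu.1.1, hux, hu.1.2⟩, by omega⟩

theorem sum_card_laterNeighborFinset {r : V → ℕ} (hr : r.Injective) :
    ∑ v, #(G.laterNeighborFinset r v) = #G.edgeFinset := by
  rw [← card_sigma]
  refine card_bij (fun p _ => s(p.1, p.2)) (fun p hp => ?_) ?_ ?_
  · simp only [mem_sigma, laterNeighborFinset, mem_filter, mem_neighborFinset] at hp
    simpa using hp.2.1
  · rintro ⟨a, b⟩ hab ⟨c, d⟩ hcd he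
    simp only [mem_sigma, laterNeighborFinset, mem_filter] at hab hcd
    obtain ⟨rfl, rfl⟩ | ⟨rfl, rfl⟩ : a = c ∧ b = d ∨ a = d ∧ b = c := Sym2.eq_iff.1 he
    · rfl
    · omega
  · intro e he
    induction e using Sym2.ind with
    | h x y =>
    have hxy : G.Adj x y := by simpa using he
    rcases lt_or_gt_of_ne (hr.ne hxy.ne) with hlt | hgt
    · exact ⟨⟨x, y⟩, by simp [laterNeighborFinset, hxy, hlt], rfl⟩
    · exact ⟨⟨y, x⟩, by simp [laterNeighborFinset, hxy.symm, hgt], Sym2.eq_swap⟩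

theorem exists_ne_card_laterNeighborFinset_add_le_one (r : V → ℕ) (hV : 2 ≤ Fintype.card V) :
    ∃ v w, v ≠ w ∧ #(G.laterNeighborFinset r v) + #(G.laterNeighborFinset r w) ≤ 1 := by
  classical
  have hne : (univ : Finset V).Nonempty := card_pos.1 (by rw [card_univ]; omega)
  obtain ⟨v, -, hv⟩ := exists_max_image univ r hne
  have hne' : (univ.erase v).Nonempty :=
    card_pos.1 (by rw [card_erase_of_mem (mem_univ v), card_univ]; omega)
  obtain ⟨w, hw, hw'⟩ := exists_max_image (univ.erase v) r hne'
  have hlv : G.laterNeighborFinset r v = ∅ := by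
    ext u
    simpa [laterNeighborFinset] using fun _ => hv u (mem_univ u)
  have hlw : G.laterNeighborFinset r w ⊆ {v} := by
    intro u hu
    simp only [laterNeighborFinset, mem_filter] at hu
    by_contra huv
    have := hw' u (by simpa using huv)
    omega
  refine ⟨v, w, (ne_of_mem_erase hw).symm, ?_⟩
  rw [hlv, card_empty, zero_add]
  exact (card_le_card hlw).trans (card_singleton v).le

theorem card_edgeFinset_add_two_mul_le {r : V → ℕ} (hr : r.Injective) (hV : 2 ≤ Fintype.card V)
    {b : ℕ} (c : V → ℕ) (hc : ∀ v, #(G.laterNeighborFinset r v) ≤ c v) (hb : ∀ v, b ≤ c v) :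
    #G.edgeFinset + 2 * b ≤ ∑ v, c v + 1 := by
  classical
  obtain ⟨v, w, hvw, hvw1⟩ := G.exists_ne_card_laterNeighborFinset_add_le_one r hV
  have hw : w ∈ univ.erase v := mem_erase.2 ⟨hvw.symm, mem_univ w⟩
  rw [← G.sum_card_laterNeighborFinset hr, ← add_sum_erase _ _ (mem_univ v),
    ← add_sum_erase _ _ hw, ← add_sum_erase _ _ (mem_univ v), ← add_sum_erase _ _ hw]
  have hrest := sum_le_sum fun u (_ : u ∈ (univ.erase v).erase w) => hc u
  have := hb v
  have := hb w
  omega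

theorem IsBipartiteWith.card_edgeFinset_le {s t : Finset V} (h : G.IsBipartiteWith ↑s ↑t) :
    #G.edgeFinset ≤ #s * #t := by
  rw [← isBipartiteWith_sum_degrees_eq_card_edges h, ← smul_eq_mul]
  exact sum_le_card_nsmul _ _ _ fun v hv => isBipartiteWith_degree_le h hv

end SimpleGraph

namespace GraphOrientation

open SimpleGraph

variable {V : Type*}

def ofRank (G : SimpleGraph V) (r : V → ℕ) (hr : r.Injective) (O : V → Set V) :
    GraphOrientation G where
  adj x y := G.Adj x y ∧ if r x < r y then y ∈ O x else x ∉ O y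
  le h := h.1
  total {x y} hxy := by
    rcases lt_trichotomy (r x) (r y) with hlt | heq | hgt
    · by_cases hy : y ∈ O x
      · exact .inl ⟨hxy, by simp [hlt, hy]⟩
      · exact .inr ⟨hxy.symm, by simp [hlt.not_gt, hy]⟩
    · exact absurd (hr heq) hxy.ne
    · by_cases hx : x ∈ O y
      · exact .inr ⟨hxy.symm, by simp [hgt, hx]⟩
      · exact .inl ⟨hxy, by simp [hgt.not_gt, hx]⟩
  asymm {x y} hxy hyx := by
    rcases lt_trichotomy (r x) (r y) with hlt | heq | hgt
    · simp [hlt, hlt.not_gt] at hxy hyx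
      exact hyx.2 hxy.2
    · exact absurd (hr heq) hxy.1.ne
    · simp [hgt, hgt.not_gt] at hxy hyx
      exact hxy.2 hyx.2

variable {G : SimpleGraph V}

open Classical in
theorem exists_card_later_le [Fintype V] [DecidableRel G.Adj] {r : V → ℕ} (hr : r.Injective)
    {a b : ℕ} (hd : ∀ v, #(G.laterNeighborFinset r v) ≤ a + b) :
    ∃ o : GraphOrientation G, ∀ v,
      #{u | o.adj v u ∧ r v < r u} ≤ a ∧ #{u | o.adj u v ∧ r v < r u} ≤ b := by
  choose O hO hOcard using fun v =>
    exists_subset_card_eq (min_le_right a #(G.laterNeighborFinset r v))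
  refine ⟨ofRank G r hr fun v => ↑(O v), fun v => ⟨?_, ?_⟩⟩
  · calc #{u | (ofRank G r hr _).adj v u ∧ r v < r u} ≤ #(O v) := card_le_card fun u hu => by
          simp only [ofRank, mem_filter, mem_univ, true_and] at hu
          simpa [hu.2] using hu.1.2
      _ ≤ a := hOcard v ▸ min_le_left _ _
  · calc #{u | (ofRank G r hr _).adj u v ∧ r v < r u}
          ≤ #(G.laterNeighborFinset r v \ O v) := card_le_card fun u hu => by
          simp only [ofRank, mem_filter, mem_univ, true_and] at hu
          simp only [laterNeighborFinset, mem_sdiff, mem_filter, mem_neighborFinset]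
          simpa [hu.2.not_gt, hu.1.1.symm, hu.2] using hu.1.2
      _ ≤ b := by have := hd v; rw [card_sdiff_of_subset (hO v), hOcard v]; omega

variable {W : Type*} {H : SimpleGraph W} (h : GraphOrientation H)

theorem isBipartiteWith_sources [Fintype W] [DecidablePred fun v => ∀ u, ¬ h.adj u v]
    (hanti : ∀ v, (∀ u, ¬ h.adj u v) ∨ (∀ u, ¬ h.adj v u)) :
    H.IsBipartiteWith ↑({v | ∀ u, ¬ h.adj u v} : Finset W)
      ↑({v | ¬ ∀ u, ¬ h.adj u v} : Finset W) := by
  refine ⟨disjoint_coe.2 (disjoint_filter_filter_not _ _ _), fun v w hvw => ?_⟩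
  have hsource {x y} (hxy : h.adj x y) : (∀ u, ¬ h.adj u x) ∧ ¬ ∀ u, ¬ h.adj u y :=
    ⟨(hanti x).resolve_right fun hx => hx y hxy, fun hy => hy x hxy⟩
  rcases h.total hvw with hxy | hyx
  · exact .inl (by simpa using hsource hxy)
  · exact .inr (by simpa using (hsource hyx).symm)

section Embedding

variable [Fintype V] (o : GraphOrientation G) [Fintype W] [DecidableRel H.Adj] {f : W → V}
  (hf : f.Injective) (hcopy : ∀ a b, h.adj a b → o.adj (f a) (f b)) (r : V → ℕ)
include hf hcopy

open Classical in
theorem card_laterNeighborFinset_le_of_source {w : W} (hw : ∀ u, ¬ h.adj u w) :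
    #(H.laterNeighborFinset (r ∘ f) w) ≤ #{u | o.adj (f w) u ∧ r (f w) < r u} := by
  refine card_le_card_of_injOn f (fun u hu => ?_) hf.injOn
  simp only [SimpleGraph.laterNeighborFinset, mem_coe, mem_filter,
    SimpleGraph.mem_neighborFinset, Function.comp_apply] at hu
  simpa [hu.2] using hcopy _ _ ((h.total hu.1).resolve_right (hw u))

open Classical in
theorem card_laterNeighborFinset_le_of_sink {w : W} (hw : ∀ u, ¬ h.adj w u) :
    #(H.laterNeighborFinset (r ∘ f) w) ≤ #{u | o.adj u (f w) ∧ r (f w) < r u} := by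
  refine card_le_card_of_injOn f (fun u hu => ?_) hf.injOn
  simp only [SimpleGraph.laterNeighborFinset, mem_coe, mem_filter,
    SimpleGraph.mem_neighborFinset, Function.comp_apply] at hu
  simpa [hu.2] using hcopy _ _ ((h.total hu.1).resolve_left (hw u))

open Classical in
theorem card_edgeFinset_add_two_mul_le_of_embedding
    (hanti : ∀ v, (∀ u, ¬ h.adj u v) ∨ (∀ u, ¬ h.adj v u)) (hW : 2 ≤ Fintype.card W)
    (hr : r.Injective) {a b : ℕ} (hba : b ≤ a)
    (ho : ∀ v, #{u | o.adj v u ∧ r v < r u} ≤ a ∧ #{u | o.adj u v ∧ r v < r u} ≤ b) :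
    #H.edgeFinset + 2 * b ≤
      a * #{v | ∀ u, ¬ h.adj u v} + b * #{v | ¬ ∀ u, ¬ h.adj u v} + 1 := by
  have hcap (w : W) :
      #(H.laterNeighborFinset (r ∘ f) w) ≤ if ∀ u, ¬ h.adj u w then a else b := by
    split_ifs with hw
    · exact (h.card_laterNeighborFinset_le_of_source o hf hcopy r hw).trans (ho (f w)).1
    · exact (h.card_laterNeighborFinset_le_of_sink o hf hcopy r
        ((hanti w).resolve_left hw)).trans (ho (f w)).2
  have := H.card_edgeFinset_add_two_mul_le (hr.comp hf) hW _ hcap fun w => by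
    split_ifs <;> omega
  rw [sum_ite, sum_const, sum_const, smul_eq_mul, smul_eq_mul] at this
  linarith

end Embedding

end GraphOrientation

theorem antidirected_not_oriented_ramsey_of_m2_general {V W : Type*} [Fintype V] [Fintype W]
    (H : SimpleGraph W) [DecidableRel H.Adj] (G : SimpleGraph V)
    (hcard : 3 ≤ Fintype.card W)
    (hδ : 2 ≤ H.minDegree)
    (hfrac : ((H.edgeFinset.card : ℚ) - 1) / ((Fintype.card W : ℚ) - 2) -
        (⌊((H.edgeFinset.card : ℚ) - 1) / ((Fintype.card W : ℚ) - 2)⌋ : ℚ) ≤ 1/2)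
    (h : GraphOrientation H)
    (hanti : ∀ v : W, (∀ u, ¬ h.adj u v) ∨ (∀ u, ¬ h.adj v u))
    (hm : ∀ J : G.Subgraph, J.verts.Nonempty →
      (J.edgeSet.ncard : ℚ) <
        (((H.edgeFinset.card : ℚ) - 1) / ((Fintype.card W : ℚ) - 2)) * J.verts.ncard) :
    ∃ o : GraphOrientation G, ¬ ∃ f : W → V, Function.Injective f ∧
      ∀ a b, h.adj a b → o.adj (f a) (f b) := by
  classical
  have hρ := H.one_lt_twoDensity hcard hδ
  obtain ⟨b, hb⟩ : ∃ b, ⌈H.twoDensity⌉₊ = b + 1 :=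
    Nat.exists_eq_add_one.2 (Nat.ceil_pos.2 (by linarith))
  have hdeg : 2 * H.twoDensity ≤ ((⌊H.twoDensity⌋₊ + b : ℕ) : ℚ) + 1 := by
    have := Nat.two_mul_le_floor_add_ceil_of_fract_le (x := H.twoDensity) (by linarith) hfrac
    rw [hb] at this
    push_cast at this ⊢
    linarith
  obtain ⟨r, hr, hrd⟩ := G.exists_injective_card_laterNeighborFinset_le fun A hA =>
    G.exists_card_neighborFinset_inter_le_of_density hdeg hm hA
  obtain ⟨o, ho⟩ := GraphOrientation.exists_card_later_le hr hrd
  refine ⟨o, fun ⟨f, hf, hcopy⟩ => ?_⟩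
  have hST := card_filter_add_card_filter_not (s := univ) fun w => ∀ u, ¬ h.adj u w
  rw [card_univ] at hST
  have hcount := h.card_edgeFinset_add_two_mul_le_of_embedding o hf hcopy r hanti (by omega) hr
    (by have := Nat.ceil_le_floor_add_one H.twoDensity; omega) ho
  refine (floor_mul_add_mul_add_one_lt_of_ceil_eq hb ?_ hρ (by omega)
    (h.isBipartiteWith_sources hanti).card_edgeFinset_le).not_ge hcount
  rw [← Nat.cast_add, hST, H.twoDensity_mul_card_sub_two hcard]

/-- Let `H` be a strictly 2-balanced graph with `δ(H) ≥ 2` and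
`m₂(H) - ⌊m₂(H)⌋ ≤ 1/2`, let `H⃗` be an anti-directed orientation of `H`, and let
`G` be a graph with `m(G) < m₂(H)`.  Then some orientation of `G` contains no copy
of `H⃗`.  (Since `H` is strictly 2-balanced, `m₂(H) = (e(H)-1)/(v(H)-2)`.) -/
theorem antidirected_not_oriented_ramsey_of_m2 {V W : Type*} [Fintype V] [Fintype W]
    (H : SimpleGraph W) [DecidableRel H.Adj] (G : SimpleGraph V)
    (hcard : 3 ≤ Fintype.card W)
    (hbal : ∀ F : H.Subgraph, F ≠ ⊤ → 3 ≤ F.verts.ncard →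
      ((F.edgeSet.ncard : ℚ) - 1) / ((F.verts.ncard : ℚ) - 2) <
        ((H.edgeFinset.card : ℚ) - 1) / ((Fintype.card W : ℚ) - 2))
    (hδ : 2 ≤ H.minDegree)
    (hfrac : ((H.edgeFinset.card : ℚ) - 1) / ((Fintype.card W : ℚ) - 2) -
        (⌊((H.edgeFinset.card : ℚ) - 1) / ((Fintype.card W : ℚ) - 2)⌋ : ℚ) ≤ 1/2)
    (h : GraphOrientation H)
    (hanti : ∀ v : W, (∀ u, ¬ h.adj u v) ∨ (∀ u, ¬ h.adj v u))
    (hm : ∀ J : G.Subgraph, J.verts.Nonempty →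
      (J.edgeSet.ncard : ℚ) <
        (((H.edgeFinset.card : ℚ) - 1) / ((Fintype.card W : ℚ) - 2)) * J.verts.ncard) :
    ∃ o : GraphOrientation G, ¬ ∃ f : W → V, Function.Injective f ∧
      ∀ a b, h.adj a b → o.adj (f a) (f b) :=
  antidirected_not_oriented_ramsey_of_m2_general H G hcard hδ hfrac h hanti hm
end

section
/- Every graph G with m(G) < 3/2 is 3-colourable, and admits an orientation containing no directed path with 3 edges. -/
/-!
If `m(G) < 3/2`, every subgraph has average degree below 3, so every nonempty vertex set
contains a vertex with at most two neighbours in it: `G` is 2-degenerate, and colouring greedily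
in reverse degeneracy order uses 3 colours. Orienting every edge towards its endpoint of larger
colour, colours strictly increase along directed paths, so no directed path has 3 edges.
-/

open Finset

namespace SimpleGraph

variable {V : Type*} (G : SimpleGraph V)

def IsDegenerate [DecidableRel G.Adj] (k : ℕ) : Prop :=
  ∀ s : Finset V, s.Nonempty → ∃ v ∈ s, #{w ∈ s | G.Adj v w} ≤ k

variable {G}

theorem IsDegenerate.exists_coloring_on [DecidableRel G.Adj] {k : ℕ} (hG : G.IsDegenerate k)
    (s : Finset V) : ∃ c : V → Fin (k + 1), ∀ u ∈ s, ∀ w ∈ s, G.Adj u w → c u ≠ c w := by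
  classical
  induction s using Finset.strongInduction with
  | _ s ih =>
    rcases s.eq_empty_or_nonempty with rfl | hs
    · exact ⟨0, by simp⟩
    obtain ⟨v, hv, hdeg⟩ := hG s hs
    obtain ⟨c, hc⟩ := ih (s.erase v) (erase_ssubset hv)
    have hused : #(image c {w ∈ s.erase v | G.Adj v w}) < #(univ : Finset (Fin (k + 1))) :=
      calc _ ≤ #{w ∈ s.erase v | G.Adj v w} := card_image_le
        _ ≤ #{w ∈ s | G.Adj v w} := card_le_card (filter_subset_filter _ (erase_subset _ _))
        _ < _ := by simpa using Nat.lt_succ_of_le hdeg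
    obtain ⟨a, -, ha⟩ := exists_mem_notMem_of_card_lt_card hused
    have hfree : ∀ w ∈ s.erase v, G.Adj v w → c w ≠ a := fun w hw hvw hwa =>
      ha (mem_image.2 ⟨w, mem_filter.2 ⟨hw, hvw⟩, hwa⟩)
    refine ⟨Function.update c v a, fun u hu w hw huw => ?_⟩
    by_cases huv : u = v <;> by_cases hwv : w = v
    · exact (G.irrefl (huv ▸ hwv ▸ huw)).elim
    · subst huv
      simpa [hwv] using (hfree w (mem_erase.2 ⟨hwv, hw⟩) huw).symm
    · subst hwv
      simpa [huv] using hfree u (mem_erase.2 ⟨huv, hu⟩) huw.symm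
    · simpa [huv, hwv] using hc u (mem_erase.2 ⟨huv, hu⟩) w (mem_erase.2 ⟨hwv, hw⟩) huw

theorem IsDegenerate.colorable [Fintype V] [DecidableRel G.Adj] {k : ℕ}
    (hG : G.IsDegenerate k) : G.Colorable (k + 1) :=
  let ⟨c, hc⟩ := hG.exists_coloring_on univ
  ⟨Coloring.mk c fun h => hc _ (mem_univ _) _ (mem_univ _) h⟩

/-- The hypothesis says `m(G) < (k + 1) / 2`. -/
theorem isDegenerate_of_two_mul_ncard_edgeSet_lt [Fintype V] [DecidableRel G.Adj] {k : ℕ}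
    (hm : ∀ J : G.Subgraph, J.verts.Nonempty → 2 * J.edgeSet.ncard < (k + 1) * J.verts.ncard) :
    G.IsDegenerate k := by
  classical
  intro s hs
  by_contra! hdeg
  set J := (⊤ : G.Subgraph).induce s
  have hdegJ : ∀ v ∈ s, J.spanningCoe.degree v = #{w ∈ s | G.Adj v w} := by
    intro v hv
    rw [← card_neighborFinset_eq_degree]
    congr 1
    ext w
    simp [J, hv]
  have hdegJ' : ∀ v ∉ s, J.spanningCoe.degree v = 0 := by
    intro v hv
    rw [← card_neighborFinset_eq_degree, card_eq_zero]
    ext w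
    simp [J, hv]
  have hedges : J.edgeSet.ncard = #J.spanningCoe.edgeFinset := by
    rw [← Subgraph.edgeSet_spanningCoe, ← coe_edgeFinset, Set.ncard_coe_finset]
  have hsparse := hm J (by simpa [J] using hs)
  have hdense : (k + 1) * #s ≤ 2 * #J.spanningCoe.edgeFinset :=
    calc (k + 1) * #s ≤ ∑ v ∈ s, J.spanningCoe.degree v := by
          rw [mul_comm, ← smul_eq_mul, ← sum_const]
          exact sum_le_sum fun v hv => (hdegJ v hv).symm ▸ hdeg v hv
      _ = ∑ v, J.spanningCoe.degree v :=
          sum_subset (subset_univ s) fun v _ hv => hdegJ' v hv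
      _ = _ := sum_degrees_eq_twice_card_edges _
  have hverts : J.verts.ncard = #s := by simp [J]
  rw [hedges, hverts] at hsparse
  omega

end SimpleGraph

namespace GraphOrientation

variable {V α : Type*} {G : SimpleGraph V} [LinearOrder α]

def ofColoring (c : G.Coloring α) : GraphOrientation G where
  adj u v := G.Adj u v ∧ c u < c v
  le h := h.1
  total h := (c.valid h).lt_or_gt.imp (⟨h, ·⟩) (⟨h.symm, ·⟩)
  asymm h h' := h.2.asymm h'.2

theorem not_exists_walk_ofColoring {k : ℕ} (c : G.Coloring (Fin k)) :
    ¬ ∃ v : Fin (k + 1) → V, ∀ i : Fin k, (ofColoring c).adj (v i.castSucc) (v i.succ) := by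
  rintro ⟨v, hv⟩
  have hmono : StrictMono (c ∘ v) := Fin.strictMono_iff_lt_succ.2 fun i => (hv i).2
  simpa using Fintype.card_le_of_injective _ hmono.injective

end GraphOrientation

/-- Every graph `G` with `m(G) < 3/2` is 3-colourable, and admits an
orientation containing no directed path with 3 edges (4 distinct vertices
`v₁ → v₂ → v₃ → v₄`). -/
theorem colorable_and_no_directed_three_path {V : Type*} [Fintype V]
    (G : SimpleGraph V)
    (hm : ∀ J : G.Subgraph, J.verts.Nonempty →
      (J.edgeSet.ncard : ℚ) < (3 / 2 : ℚ) * J.verts.ncard) :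
    G.Colorable 3 ∧
    ∃ o : GraphOrientation G, ¬ ∃ v : Fin 4 → V, Function.Injective v ∧
      o.adj (v 0) (v 1) ∧ o.adj (v 1) (v 2) ∧ o.adj (v 2) (v 3) := by
  classical
  have hdeg : G.IsDegenerate 2 :=
    SimpleGraph.isDegenerate_of_two_mul_ncard_edgeSet_lt fun J hJ => by
      have := hm J hJ
      exact_mod_cast (by linarith : (2 * J.edgeSet.ncard : ℚ) < 3 * J.verts.ncard)
  obtain ⟨c⟩ := hdeg.colorable
  refine ⟨⟨c⟩, .ofColoring c, ?_⟩
  rintro ⟨v, -, h01, h12, h23⟩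
  exact GraphOrientation.not_exists_walk_ofColoring c ⟨v, fun i => by fin_cases i <;> assumption⟩
end
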